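/- Let Δ ⊂ ℝ² be a bounded open set, μ, η : Δ → (0,∞) continuous, and Φ : Δ → Δ a C¹ diffeomorphism satisfying the incompressibility constraint μ(Φ(x,y))·|det DΦ(x,y)| = η(x,y) on Δ. Then ∫_Δ μ²(Φ)·tr²(|DΦ|²) dx dy ≥ 4 ∫_Δ η² dx dy, and equality holds if and only if μ(Φ(x,y))·|DΦ(x,y)|² = η(x,y)·I at every point of Δ (where I is the 2×2 identity), i.e. if and only if the induced deformation is an isometry. -/

import Mathlib

open Matrix MeasureTheory

/-- Partial derivative in the `x`-direction. -/
noncomputable def pdx {E : Type*} [NormedAddCommGroup E] [NormedSpace ℝ E]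
    (f : ℝ × ℝ → E) (p : ℝ × ℝ) : E := fderiv ℝ f p (1, 0)

/-- Partial derivative in the `y`-direction. -/
noncomputable def pdy {E : Type*} [NormedAddCommGroup E] [NormedSpace ℝ E]
    (f : ℝ × ℝ → E) (p : ℝ × ℝ) : E := fderiv ℝ f p (0, 1)

/-- Euclidean dot product on `ℝ²`. -/
def dot (a b : ℝ × ℝ) : ℝ := a.1 * b.1 + a.2 * b.2

/-- The Gram matrix `|DΦ|²` of a map `Φ : ℝ² → ℝ²`. -/
noncomputable def gram (Φ : ℝ × ℝ → ℝ × ℝ) (p : ℝ × ℝ) : Matrix (Fin 2) (Fin 2) ℝ :=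
  !![dot (pdx Φ p) (pdx Φ p), dot (pdx Φ p) (pdy Φ p);
     dot (pdx Φ p) (pdy Φ p), dot (pdy Φ p) (pdy Φ p)]

/-- The matrix `DΦ := [[∂_xφ₁, ∂_xφ₂],[∂_yφ₁, ∂_yφ₂]]` of a map `Φ : ℝ² → ℝ²`. -/
noncomputable def DPhi (Φ : ℝ × ℝ → ℝ × ℝ) (p : ℝ × ℝ) : Matrix (Fin 2) (Fin 2) ℝ :=
  !![(pdx Φ p).1, (pdx Φ p).2;
     (pdy Φ p).1, (pdy Φ p).2]

lemma alg_le (m e x1 x2 y1 y2 : ℝ)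
    (h1 : m * |x1 * y2 - x2 * y1| = e) :
    4 * e ^ 2 ≤ m ^ 2 * (x1 * x1 + x2 * x2 + (y1 * y1 + y2 * y2)) ^ 2 := by
  rw [← h1, mul_pow, sq_abs]
  nlinarith [sq_nonneg (m * (x1 * x1 + x2 * x2 - y1 * y1 - y2 * y2)),
    sq_nonneg (m * (x1 * y1 + x2 * y2))]

lemma alg_eq (m e x1 x2 y1 y2 : ℝ) (hm : 0 < m)
    (h1 : m * |x1 * y2 - x2 * y1| = e)
    (hfg : m ^ 2 * (x1 * x1 + x2 * x2 + (y1 * y1 + y2 * y2)) ^ 2 = 4 * e ^ 2) :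
    m * (x1 * x1 + x2 * x2) = e ∧ m * (x1 * y1 + x2 * y2) = 0 ∧
      m * (y1 * y1 + y2 * y2) = e := by
  rw [← h1] at hfg
  have h3 : m ^ 2 * ((x1 * x1 + x2 * x2 - (y1 * y1 + y2 * y2)) ^ 2
      + 4 * (x1 * y1 + x2 * y2) ^ 2) = 0 := by
    have hsa : |x1 * y2 - x2 * y1| ^ 2 = (x1 * y2 - x2 * y1) ^ 2 := sq_abs _
    linear_combination hfg + 4 * m ^ 2 * hsa
  have hm2 : (0:ℝ) < m ^ 2 := by positivity
  have hab : (x1 * x1 + x2 * x2 - (y1 * y1 + y2 * y2)) ^ 2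
      + 4 * (x1 * y1 + x2 * y2) ^ 2 = 0 := by
    rcases mul_eq_zero.1 h3 with h | h
    · exact absurd h (ne_of_gt hm2)
    · exact h
  have h4 : (x1 * x1 + x2 * x2 - (y1 * y1 + y2 * y2)) ^ 2 = 0 := by
    nlinarith [sq_nonneg (x1 * y1 + x2 * y2)]
  have h5 : (x1 * y1 + x2 * y2) ^ 2 = 0 := by
    nlinarith [sq_nonneg (x1 * x1 + x2 * x2 - (y1 * y1 + y2 * y2))]
  have ha : x1 * x1 + x2 * x2 = y1 * y1 + y2 * y2 := by
    have := pow_eq_zero_iff (n := 2) (by norm_num) |>.1 h4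
    linarith
  have hb : x1 * y1 + x2 * y2 = 0 := pow_eq_zero_iff (n := 2) (by norm_num) |>.1 h5
  have hD2 : (x1 * y2 - x2 * y1) ^ 2 = (x1 * x1 + x2 * x2) ^ 2 := by
    nlinarith [ha, hb]
  have hDa : |x1 * y2 - x2 * y1| = x1 * x1 + x2 * x2 := by
    rw [← Real.sqrt_sq_eq_abs, hD2, Real.sqrt_sq (by nlinarith [sq_nonneg x1, sq_nonneg x2])]
  rw [hDa] at h1
  refine ⟨h1, by rw [hb, mul_zero], by rw [← ha]; exact h1⟩

lemma cont_ae_zero (Δ : Set (ℝ × ℝ)) (hΔ : IsOpen Δ) (F : ℝ × ℝ → ℝ)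
    (hc : ContinuousOn F Δ) (h0 : ∀ p ∈ Δ, 0 ≤ F p)
    (hae : F =ᵐ[volume.restrict Δ] 0) : ∀ p ∈ Δ, F p = 0 := by
  intro p hp
  by_contra hne
  have hpos : 0 < F p := lt_of_le_of_ne (h0 p hp) (Ne.symm hne)
  have hV : IsOpen (Δ ∩ F ⁻¹' Set.Ioi 0) := hc.isOpen_inter_preimage hΔ isOpen_Ioi
  have hpV : p ∈ Δ ∩ F ⁻¹' Set.Ioi 0 := ⟨hp, hpos⟩
  have hposm : 0 < volume (Δ ∩ F ⁻¹' Set.Ioi 0) := hV.measure_pos volume ⟨p, hpV⟩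
  have hnull : volume.restrict Δ {x | F x ≠ 0} = 0 := by
    simpa [Filter.EventuallyEq, ae_iff] using hae
  have h0' : volume.restrict Δ (Δ ∩ F ⁻¹' Set.Ioi 0) = 0 :=
    measure_mono_null (fun x hx => ne_of_gt hx.2) hnull
  rw [Measure.restrict_apply' hΔ.measurableSet,
    Set.inter_eq_self_of_subset_left Set.inter_subset_left] at h0'
  exact absurd h0' (ne_of_gt hposm)


/-- For positive continuous densities `μ, η` on a bounded open
`Δ ⊂ ℝ²` and a `C¹` diffeomorphism `Φ` of `Δ` with `μ(Φ)·|det DΦ| = η`, one has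
`∫_Δ μ²(Φ)·tr²(|DΦ|²) ≥ 4∫_Δ η²`, with equality iff `μ(Φ)·|DΦ|² = η·I` on `Δ`
(the induced deformation is an isometry). -/
theorem stmt_10 (Δ : Set (ℝ × ℝ)) (hΔ : IsOpen Δ) (hbd : Bornology.IsBounded Δ)
    (μ η : ℝ × ℝ → ℝ) (hμc : ContinuousOn μ Δ) (hηc : ContinuousOn η Δ)
    (hμ : ∀ p ∈ Δ, 0 < μ p) (hη : ∀ p ∈ Δ, 0 < η p)
    (Φ : ℝ × ℝ → ℝ × ℝ) (hΦ : ContDiffOn ℝ 1 Φ Δ)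
    (hΦinj : Set.InjOn Φ Δ) (hΦim : Φ '' Δ = Δ)
    (hcon : ∀ p ∈ Δ, μ (Φ p) * |(DPhi Φ p).det| = η p)
    (hint : IntegrableOn (fun p => μ (Φ p) ^ 2 * (gram Φ p).trace ^ 2) Δ volume) :
    4 * ∫ p in Δ, η p ^ 2 ≤ (∫ p in Δ, μ (Φ p) ^ 2 * (gram Φ p).trace ^ 2) ∧
      ((∫ p in Δ, μ (Φ p) ^ 2 * (gram Φ p).trace ^ 2) = 4 * ∫ p in Δ, η p ^ 2
        ↔ ∀ p ∈ Δ, μ (Φ p) • gram Φ p = η p • (1 : Matrix (Fin 2) (Fin 2) ℝ)) := by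
  have hmeas := hΔ.measurableSet
  have hΦmem : ∀ p ∈ Δ, Φ p ∈ Δ := fun p hp => hΦim ▸ Set.mem_image_of_mem Φ hp
  have htr : ∀ p, (gram Φ p).trace =
      (pdx Φ p).1 * (pdx Φ p).1 + (pdx Φ p).2 * (pdx Φ p).2 +
      ((pdy Φ p).1 * (pdy Φ p).1 + (pdy Φ p).2 * (pdy Φ p).2) := fun p => by
    simp [_root_.gram, dot, Matrix.trace_fin_two_of]
  have hdet : ∀ p, (DPhi Φ p).det =
      (pdx Φ p).1 * (pdy Φ p).2 - (pdx Φ p).2 * (pdy Φ p).1 := fun p => by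
    simp [DPhi, Matrix.det_fin_two_of]
  have hcon' : ∀ p ∈ Δ,
      μ (Φ p) * |(pdx Φ p).1 * (pdy Φ p).2 - (pdx Φ p).2 * (pdy Φ p).1| = η p := by
    intro p hp; rw [← hdet]; exact hcon p hp
  have hle : ∀ p ∈ Δ, 4 * η p ^ 2 ≤ μ (Φ p) ^ 2 * (gram Φ p).trace ^ 2 := by
    intro p hp; rw [htr]; exact alg_le _ _ _ _ _ _ (hcon' p hp)
  -- continuity of the integrands on Δ
  have hfd : ContinuousOn (fderiv ℝ Φ) Δ := hΦ.continuousOn_fderiv_of_isOpen hΔ le_rfl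
  have hpdx : ContinuousOn (pdx Φ) Δ := hfd.clm_apply continuousOn_const
  have hpdy : ContinuousOn (pdy Φ) Δ := hfd.clm_apply continuousOn_const
  have htrc : ContinuousOn (fun p => (gram Φ p).trace) Δ := by
    have : (fun p => (gram Φ p).trace) = fun p =>
        (pdx Φ p).1 * (pdx Φ p).1 + (pdx Φ p).2 * (pdx Φ p).2 +
        ((pdy Φ p).1 * (pdy Φ p).1 + (pdy Φ p).2 * (pdy Φ p).2) := funext htr
    rw [this]
    exact ((hpdx.fst.mul hpdx.fst).add (hpdx.snd.mul hpdx.snd)).add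
      ((hpdy.fst.mul hpdy.fst).add (hpdy.snd.mul hpdy.snd))
  have hμΦ : ContinuousOn (fun p => μ (Φ p)) Δ :=
    hμc.comp hΦ.continuousOn (fun p hp => hΦmem p hp)
  have hfc : ContinuousOn (fun p => μ (Φ p) ^ 2 * (gram Φ p).trace ^ 2) Δ :=
    (hμΦ.pow 2).mul (htrc.pow 2)
  have hgc : ContinuousOn (fun p => 4 * η p ^ 2) Δ := continuousOn_const.mul (hηc.pow 2)
  have hgm : AEStronglyMeasurable (fun p => 4 * η p ^ 2) (volume.restrict Δ) :=
    hgc.aestronglyMeasurable hmeas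
  have hgint : IntegrableOn (fun p => 4 * η p ^ 2) Δ :=
    hint.mono' hgm ((ae_restrict_iff' hmeas).2 (Filter.Eventually.of_forall fun p hp => by
      rw [Real.norm_eq_abs, abs_of_nonneg (by positivity)]; exact hle p hp))
  have hineq : (∫ p in Δ, 4 * η p ^ 2) ≤ ∫ p in Δ, μ (Φ p) ^ 2 * (gram Φ p).trace ^ 2 :=
    setIntegral_mono_on hgint hint hmeas hle
  have hconst : (∫ p in Δ, 4 * η p ^ 2) = 4 * ∫ p in Δ, η p ^ 2 := integral_const_mul 4 _
  refine ⟨by rw [← hconst]; exact hineq, ?_, ?_⟩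
  · intro hEq
    have hzero : (∫ p in Δ, (μ (Φ p) ^ 2 * (gram Φ p).trace ^ 2 - 4 * η p ^ 2)) = 0 := by
      rw [integral_sub hint hgint, hconst, hEq]; ring
    have hnn : 0 ≤ᵐ[volume.restrict Δ]
        fun p => μ (Φ p) ^ 2 * (gram Φ p).trace ^ 2 - 4 * η p ^ 2 :=
      (ae_restrict_iff' hmeas).2 (Filter.Eventually.of_forall fun p hp => by
        have := hle p hp; simp only [Pi.zero_apply]; linarith)
    have hae : (fun p => μ (Φ p) ^ 2 * (gram Φ p).trace ^ 2 - 4 * η p ^ 2)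
        =ᵐ[volume.restrict Δ] 0 :=
      (integral_eq_zero_iff_of_nonneg_ae hnn (hint.sub hgint)).1 hzero
    have hpt := cont_ae_zero Δ hΔ _ (hfc.sub hgc)
      (fun q hq => by have := hle q hq; simp only [Pi.sub_apply]; linarith) hae
    intro p hp
    have hfg : μ (Φ p) ^ 2 * ((pdx Φ p).1 * (pdx Φ p).1 + (pdx Φ p).2 * (pdx Φ p).2 +
        ((pdy Φ p).1 * (pdy Φ p).1 + (pdy Φ p).2 * (pdy Φ p).2)) ^ 2 = 4 * η p ^ 2 := by
      have := hpt p hp; simp only [Pi.sub_apply] at this; rw [htr] at this; linarith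
    obtain ⟨e1, e2, e3⟩ :=
      alg_eq (μ (Φ p)) (η p) _ _ _ _ (hμ _ (hΦmem p hp)) (hcon' p hp) hfg
    have hmne := (hμ _ (hΦmem p hp)).ne'
    have hb : (pdx Φ p).1 * (pdy Φ p).1 + (pdx Φ p).2 * (pdy Φ p).2 = 0 := by
      rcases mul_eq_zero.1 e2 with h | h
      · exact absurd h hmne
      · exact h
    ext i j
    fin_cases i <;> fin_cases j <;>
      simp [_root_.gram, dot, Matrix.one_apply] <;>
      first
        | linarith
        | exact Or.inr hb
  · intro hiso
    have hptfg : ∀ p ∈ Δ,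
        μ (Φ p) ^ 2 * (gram Φ p).trace ^ 2 = 4 * η p ^ 2 := by
      intro p hp
      have e1 := Matrix.ext_iff.2 (hiso p hp) 0 0
      have e3 := Matrix.ext_iff.2 (hiso p hp) 1 1
      simp [_root_.gram, dot, Matrix.one_apply] at e1 e3
      rw [htr]
      linear_combination (μ (Φ p) * ((pdx Φ p).1 * (pdx Φ p).1 + (pdx Φ p).2 * (pdx Φ p).2)
        + μ (Φ p) * ((pdy Φ p).1 * (pdy Φ p).1 + (pdy Φ p).2 * (pdy Φ p).2)
        + 2 * η p) * (e1 + e3)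
    rw [← hconst]
    exact setIntegral_congr_fun hmeas hptfg
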